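/- Let H be a finite simple graph on vertex set A ⊔ B ⊔ L ⊔ R with |L| = |R| = N ≥ 1, an integer d ≥ 3 and a real 0 < φ ≤ 1, such that: (i) the subgraph G of H induced on A ∪ B is bipartite with parts A and B, and all remaining edges of H go between A and L, between B and R, or between L and R; (ii) every a ∈ A has exactly deg_G(a) + 3 neighbors in L, and every b ∈ B has exactly deg_G(b) + 3 neighbors in R; (iii) every x ∈ L has at most d neighbors in A, and every y ∈ R has at most d neighbors in B; (iv) the bipartite graph X of L–R edges is d-regular and satisfies e_X(T, (L∪R)\T) ≥ φ·d·|T| for every T ⊆ L ∪ R with |T| ≤ N. Then H is bipartite with parts A ∪ R and B ∪ L, and there is a constant c > 0, depending only on φ, such that H is a c-expander. -/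

import Mathlib

open Finset

variable {W : Type*}

/-- The volume of a set of vertices: the sum of their degrees. -/
def vol (H : SimpleGraph W) [Fintype W] [DecidableRel H.Adj] (S : Finset W) : ℕ :=
  ∑ v ∈ S, H.degree v

/-- The number of edges of `H` with one endpoint in `S` and the other in `T`
(for disjoint `S` and `T`), counted as ordered pairs in `S × T`. -/
def ecount (H : SimpleGraph W) [DecidableRel H.Adj] (S T : Finset W) : ℕ :=
  ((S ×ˢ T).filter fun p => H.Adj p.1 p.2).card

lemma ecount_eq_sum (H : SimpleGraph W) [Fintype W] [DecidableRel H.Adj] [DecidableEq W]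
    (S T : Finset W) : ecount H S T = ∑ s ∈ S, (T ∩ H.neighborFinset s).card := by
  unfold ecount
  rw [Finset.card_filter, Finset.sum_product]
  refine Finset.sum_congr rfl fun a _ => ?_
  have h : T ∩ H.neighborFinset a = T.filter (fun b => H.Adj a b) := by
    ext b; simp [SimpleGraph.mem_neighborFinset, and_comm]
  rw [h, Finset.card_filter]

lemma ecount_comm (H : SimpleGraph W) [DecidableRel H.Adj] (S T : Finset W) :
    ecount H S T = ecount H T S := by
  unfold ecount
  apply Finset.card_nbij' (fun p => p.swap) (fun p => p.swap) <;>
    simp [Finset.mem_filter, H.adj_comm, Set.MapsTo] <;> tauto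

lemma ecount_union_right (H : SimpleGraph W) [Fintype W] [DecidableRel H.Adj] [DecidableEq W]
    (S X Y : Finset W) (h : Disjoint X Y) :
    ecount H S (X ∪ Y) = ecount H S X + ecount H S Y := by
  rw [ecount_eq_sum, ecount_eq_sum, ecount_eq_sum, ← Finset.sum_add_distrib]
  refine Finset.sum_congr rfl fun a _ => ?_
  rw [Finset.union_inter_distrib_right, Finset.card_union_of_disjoint]
  exact h.mono Finset.inter_subset_left Finset.inter_subset_left

lemma ecount_mono_left (H : SimpleGraph W) [Fintype W] [DecidableRel H.Adj] [DecidableEq W]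
    {S S' : Finset W} (T : Finset W) (h : S ⊆ S') : ecount H S T ≤ ecount H S' T := by
  rw [ecount_eq_sum, ecount_eq_sum]
  exact Finset.sum_le_sum_of_subset h

lemma ecount_mono_right (H : SimpleGraph W) [Fintype W] [DecidableRel H.Adj] [DecidableEq W]
    (S : Finset W) {T T' : Finset W} (h : T ⊆ T') : ecount H S T ≤ ecount H S T' := by
  rw [ecount_eq_sum, ecount_eq_sum]
  exact Finset.sum_le_sum fun a _ => Finset.card_le_card (Finset.inter_subset_inter_right h)

lemma ecount_union_left (H : SimpleGraph W) [Fintype W] [DecidableRel H.Adj] [DecidableEq W]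
    {P Q : Finset W} (T : Finset W) (h : Disjoint P Q) :
    ecount H (P ∪ Q) T = ecount H P T + ecount H Q T := by
  rw [ecount_eq_sum, ecount_eq_sum, ecount_eq_sum]; exact Finset.sum_union h

lemma vol_union (H : SimpleGraph W) [Fintype W] [DecidableRel H.Adj] [DecidableEq W]
    {P Q : Finset W} (h : Disjoint P Q) : vol H (P ∪ Q) = vol H P + vol H Q :=
  Finset.sum_union h

lemma ecount_le_card_mul (H : SimpleGraph W) [Fintype W] [DecidableRel H.Adj] [DecidableEq W]
    {S : Finset W} {A : Finset W} {d : ℕ} (T : Finset W)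
    (h : ∀ x ∈ S, (H.neighborFinset x ∩ A).card ≤ d) (hT : T ⊆ A) :
    ecount H S T ≤ d * S.card := by
  rw [ecount_eq_sum]
  calc ∑ s ∈ S, (T ∩ H.neighborFinset s).card
      ≤ ∑ s ∈ S, d := by
        refine Finset.sum_le_sum fun x hx => le_trans ?_ (h x hx)
        refine Finset.card_le_card fun y hy => ?_
        have := Finset.mem_inter.1 hy
        exact Finset.mem_inter.2 ⟨this.2, hT this.1⟩
    _ = d * S.card := by rw [Finset.sum_const, smul_eq_mul, mul_comm]

/-- One-side bound: `vol(S∩A) ≤ 2·e(S∩A, L\S) + 2·d·|S∩L|`. -/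
lemma side_bound (H : SimpleGraph W) [Fintype W] [DecidableRel H.Adj] [DecidableEq W]
    (A L S : Finset W) (d : ℕ)
    (hdeg : ∀ a ∈ A, H.degree a ≤ 2 * (H.neighborFinset a ∩ L).card)
    (hLd : ∀ x ∈ L, (H.neighborFinset x ∩ A).card ≤ d) :
    vol H (S ∩ A) ≤ 2 * ecount H (S ∩ A) (L \ S) + 2 * (d * (S ∩ L).card) := by
  have h1 : vol H (S ∩ A) ≤ 2 * ecount H (S ∩ A) L := by
    rw [ecount_eq_sum, Finset.mul_sum]
    refine Finset.sum_le_sum fun a ha => ?_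
    rw [Finset.inter_comm]
    exact hdeg a (Finset.mem_of_mem_inter_right ha)
  have hLsplit : (L ∩ S) ∪ (L \ S) = L := by
    ext x; simp only [Finset.mem_union, Finset.mem_inter, Finset.mem_sdiff]; tauto
  have hdisj : Disjoint (L ∩ S) (L \ S) := by
    rw [Finset.disjoint_left]; intro x hx hx'
    exact (Finset.mem_sdiff.1 hx').2 (Finset.mem_of_mem_inter_right hx)
  have h2 : ecount H (S ∩ A) L = ecount H (S ∩ A) (L ∩ S) + ecount H (S ∩ A) (L \ S) := by
    rw [← hLsplit, ecount_union_right _ _ _ _ hdisj, hLsplit]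
  have h3 : ecount H (S ∩ A) (L ∩ S) ≤ d * (S ∩ L).card := by
    rw [ecount_comm, Finset.inter_comm S L]
    refine ecount_le_card_mul H _ (fun x hx => hLd x (Finset.mem_of_mem_inter_left hx))
      Finset.inter_subset_right
  omega

lemma key_expansion {W : Type} [Fintype W] [DecidableEq W] (H : SimpleGraph W)
    [DecidableRel H.Adj]
    (A B L R : Finset W) (N d : ℕ) (φ : ℝ)
    (hφ0 : 0 < φ) (hφ1 : φ ≤ 1)
    (hAB : Disjoint A B) (hAL : Disjoint A L) (hAR : Disjoint A R)
    (hBL : Disjoint B L) (hBR : Disjoint B R) (hLR : Disjoint L R)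
    (hUniv : A ∪ B ∪ L ∪ R = Finset.univ)
    (hEdge : ∀ u v : W, H.Adj u v →
      (u ∈ A ∧ v ∈ B) ∨ (u ∈ B ∧ v ∈ A) ∨ (u ∈ A ∧ v ∈ L) ∨ (u ∈ L ∧ v ∈ A) ∨
      (u ∈ B ∧ v ∈ R) ∨ (u ∈ R ∧ v ∈ B) ∨ (u ∈ L ∧ v ∈ R) ∨ (u ∈ R ∧ v ∈ L))
    (hA : ∀ a ∈ A, (H.neighborFinset a ∩ L).card = (H.neighborFinset a ∩ B).card + 3)
    (hB : ∀ b ∈ B, (H.neighborFinset b ∩ R).card = (H.neighborFinset b ∩ A).card + 3)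
    (hLd : ∀ x ∈ L, (H.neighborFinset x ∩ A).card ≤ d)
    (hRd : ∀ y ∈ R, (H.neighborFinset y ∩ B).card ≤ d)
    (hX : ∀ T ⊆ L ∪ R, T.card ≤ N →
      φ * (d : ℝ) * (T.card : ℝ) ≤
        ((ecount H (T ∩ L) (R \ T) + ecount H (T ∩ R) (L \ T) : ℕ) : ℝ))
    (hvolL : ∀ x ∈ L, H.degree x ≤ 2 * d) (hvolR : ∀ y ∈ R, H.degree y ≤ 2 * d)
    (S : Finset W) (hS : (S ∩ (L ∪ R)).card ≤ N) :
    φ / 4 * (vol H S : ℝ) ≤ (ecount H S Sᶜ : ℝ) := by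
  -- membership of every vertex
  have hmem : ∀ v : W, v ∈ A ∪ B ∪ L ∪ R := fun v => by rw [hUniv]; exact Finset.mem_univ v
  -- neighbor structure
  have hNA : ∀ a ∈ A, H.neighborFinset a ⊆ B ∪ L := by
    intro a ha v hv
    rw [SimpleGraph.mem_neighborFinset] at hv
    rcases hEdge a v hv with ⟨h1, h2⟩ | ⟨h1, h2⟩ | ⟨h1, h2⟩ | ⟨h1, h2⟩ | ⟨h1, h2⟩ |
      ⟨h1, h2⟩ | ⟨h1, h2⟩ | ⟨h1, h2⟩
    · exact Finset.mem_union_left _ h2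
    · exact absurd h1 (Finset.disjoint_left.1 hAB ha)
    · exact Finset.mem_union_right _ h2
    · exact absurd h1 (Finset.disjoint_left.1 hAL ha)
    · exact absurd h1 (Finset.disjoint_left.1 hAB ha)
    · exact absurd h1 (Finset.disjoint_left.1 hAR ha)
    · exact absurd h1 (Finset.disjoint_left.1 hAL ha)
    · exact absurd h1 (Finset.disjoint_left.1 hAR ha)
  have hNB : ∀ b ∈ B, H.neighborFinset b ⊆ A ∪ R := by
    intro b hb v hv
    rw [SimpleGraph.mem_neighborFinset] at hv
    rcases hEdge b v hv with ⟨h1, h2⟩ | ⟨h1, h2⟩ | ⟨h1, h2⟩ | ⟨h1, h2⟩ | ⟨h1, h2⟩ |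
      ⟨h1, h2⟩ | ⟨h1, h2⟩ | ⟨h1, h2⟩
    · exact absurd h1 (Finset.disjoint_right.1 hAB hb)
    · exact Finset.mem_union_left _ h2
    · exact absurd h1 (Finset.disjoint_right.1 hAB hb)
    · exact absurd h1 (Finset.disjoint_left.1 hBL hb)
    · exact Finset.mem_union_right _ h2
    · exact absurd h1 (Finset.disjoint_left.1 hBR hb)
    · exact absurd h1 (Finset.disjoint_left.1 hBL hb)
    · exact absurd h1 (Finset.disjoint_left.1 hBR hb)
  -- degree bounds for A and B vertices
  have hdegA : ∀ a ∈ A, H.degree a ≤ 2 * (H.neighborFinset a ∩ L).card := by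
    intro a ha
    have hsub : H.neighborFinset a ⊆ (H.neighborFinset a ∩ B) ∪ (H.neighborFinset a ∩ L) := by
      intro v hv
      rcases Finset.mem_union.1 (hNA a ha hv) with h | h
      · exact Finset.mem_union_left _ (Finset.mem_inter.2 ⟨hv, h⟩)
      · exact Finset.mem_union_right _ (Finset.mem_inter.2 ⟨hv, h⟩)
    have h1 : H.degree a ≤ (H.neighborFinset a ∩ B).card + (H.neighborFinset a ∩ L).card :=
      le_trans (Finset.card_le_card hsub) (Finset.card_union_le _ _)
    have h2 := hA a ha
    omega
  have hdegB : ∀ b ∈ B, H.degree b ≤ 2 * (H.neighborFinset b ∩ R).card := by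
    intro b hb
    have hsub : H.neighborFinset b ⊆ (H.neighborFinset b ∩ A) ∪ (H.neighborFinset b ∩ R) := by
      intro v hv
      rcases Finset.mem_union.1 (hNB b hb hv) with h | h
      · exact Finset.mem_union_left _ (Finset.mem_inter.2 ⟨hv, h⟩)
      · exact Finset.mem_union_right _ (Finset.mem_inter.2 ⟨hv, h⟩)
    have h1 : H.degree b ≤ (H.neighborFinset b ∩ A).card + (H.neighborFinset b ∩ R).card :=
      le_trans (Finset.card_le_card hsub) (Finset.card_union_le _ _)
    have h2 := hB b hb
    omega
  -- pairwise disjointness of parts of S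
  have dAB : Disjoint (S ∩ A) (S ∩ B) := hAB.mono Finset.inter_subset_right Finset.inter_subset_right
  have dAL : Disjoint (S ∩ A) (S ∩ L) := hAL.mono Finset.inter_subset_right Finset.inter_subset_right
  have dAR : Disjoint (S ∩ A) (S ∩ R) := hAR.mono Finset.inter_subset_right Finset.inter_subset_right
  have dBL : Disjoint (S ∩ B) (S ∩ L) := hBL.mono Finset.inter_subset_right Finset.inter_subset_right
  have dBR : Disjoint (S ∩ B) (S ∩ R) := hBR.mono Finset.inter_subset_right Finset.inter_subset_right
  have dLR : Disjoint (S ∩ L) (S ∩ R) := hLR.mono Finset.inter_subset_right Finset.inter_subset_right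
  have d1 : Disjoint (S ∩ A) (S ∩ B ∪ (S ∩ L ∪ S ∩ R)) := by
    rw [Finset.disjoint_union_right, Finset.disjoint_union_right]; exact ⟨dAB, dAL, dAR⟩
  have d2 : Disjoint (S ∩ B) (S ∩ L ∪ S ∩ R) := by
    rw [Finset.disjoint_union_right]; exact ⟨dBL, dBR⟩
  have hSdec : S = (S ∩ A) ∪ ((S ∩ B) ∪ ((S ∩ L) ∪ (S ∩ R))) := by
    ext v
    have hv := hmem v
    simp only [Finset.mem_union, Finset.mem_inter] at hv ⊢
    tauto
  -- volume decomposition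
  have f6 : vol H S = vol H (S ∩ A) + (vol H (S ∩ B) + (vol H (S ∩ L) + vol H (S ∩ R))) := by
    conv_lhs => rw [hSdec]
    rw [vol_union H d1, vol_union H d2, vol_union H dLR]
  -- edge count decomposition & lower bound
  have f5 : ecount H (S ∩ A) (L \ S) + ecount H (S ∩ B) (R \ S)
      + ecount H (S ∩ L) (R \ S) + ecount H (S ∩ R) (L \ S) ≤ ecount H S Sᶜ := by
    have he : ecount H S Sᶜ = ecount H (S ∩ A) Sᶜ + (ecount H (S ∩ B) Sᶜ +
        (ecount H (S ∩ L) Sᶜ + ecount H (S ∩ R) Sᶜ)) := by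
      nth_rewrite 1 [hSdec]
      rw [ecount_union_left H _ d1, ecount_union_left H _ d2, ecount_union_left H _ dLR]
    have hLs : L \ S ⊆ Sᶜ := fun v hv => Finset.mem_compl.2 (Finset.mem_sdiff.1 hv).2
    have hRs : R \ S ⊆ Sᶜ := fun v hv => Finset.mem_compl.2 (Finset.mem_sdiff.1 hv).2
    have m1 := ecount_mono_right H (S ∩ A) hLs
    have m2 := ecount_mono_right H (S ∩ B) hRs
    have m3 := ecount_mono_right H (S ∩ L) hRs
    have m4 := ecount_mono_right H (S ∩ R) hLs
    omega
  -- side bounds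
  have f1 := side_bound H A L S d hdegA hLd
  have f2 := side_bound H B R S d hdegB hRd
  -- volume of expander-side parts
  have f3 : vol H (S ∩ L) ≤ 2 * (d * (S ∩ L).card) := by
    calc vol H (S ∩ L) ≤ ∑ _x ∈ S ∩ L, 2 * d :=
          Finset.sum_le_sum fun x hx => hvolL x (Finset.mem_of_mem_inter_right hx)
      _ = 2 * (d * (S ∩ L).card) := by rw [Finset.sum_const, smul_eq_mul]; ring
  have f4 : vol H (S ∩ R) ≤ 2 * (d * (S ∩ R).card) := by
    calc vol H (S ∩ R) ≤ ∑ _x ∈ S ∩ R, 2 * d :=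
          Finset.sum_le_sum fun x hx => hvolR x (Finset.mem_of_mem_inter_right hx)
      _ = 2 * (d * (S ∩ R).card) := by rw [Finset.sum_const, smul_eq_mul]; ring
  -- expander hypothesis applied to T = S ∩ (L ∪ R)
  have hTL : S ∩ (L ∪ R) ∩ L = S ∩ L := by
    ext v; simp only [Finset.mem_inter, Finset.mem_union]; tauto
  have hTR : S ∩ (L ∪ R) ∩ R = S ∩ R := by
    ext v; simp only [Finset.mem_inter, Finset.mem_union]; tauto
  have hRT : R \ (S ∩ (L ∪ R)) = R \ S := by
    ext v; simp only [Finset.mem_sdiff, Finset.mem_inter, Finset.mem_union]; tauto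
  have hLT : L \ (S ∩ (L ∪ R)) = L \ S := by
    ext v; simp only [Finset.mem_sdiff, Finset.mem_inter, Finset.mem_union]; tauto
  have hTcard : (S ∩ (L ∪ R)).card = (S ∩ L).card + (S ∩ R).card := by
    rw [show S ∩ (L ∪ R) = (S ∩ L) ∪ (S ∩ R) by
      ext v; simp only [Finset.mem_inter, Finset.mem_union]; tauto]
    exact Finset.card_union_of_disjoint dLR
  have f7 := hX (S ∩ (L ∪ R)) Finset.inter_subset_right hS
  rw [hTL, hTR, hRT, hLT, hTcard] at f7
  -- put everything together over ℝ
  rw [f6]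
  have p1 : φ * ((vol H (S ∩ A) : ℝ)) ≤
      φ * (2 * (ecount H (S ∩ A) (L \ S) : ℝ) + 2 * ((d : ℝ) * ((S ∩ L).card : ℝ))) := by
    refine mul_le_mul_of_nonneg_left ?_ hφ0.le
    exact_mod_cast f1
  have p2 : φ * ((vol H (S ∩ B) : ℝ)) ≤
      φ * (2 * (ecount H (S ∩ B) (R \ S) : ℝ) + 2 * ((d : ℝ) * ((S ∩ R).card : ℝ))) := by
    refine mul_le_mul_of_nonneg_left ?_ hφ0.le
    exact_mod_cast f2
  have p3 : φ * ((vol H (S ∩ L) : ℝ)) ≤ φ * (2 * ((d : ℝ) * ((S ∩ L).card : ℝ))) := by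
    refine mul_le_mul_of_nonneg_left ?_ hφ0.le
    exact_mod_cast f3
  have p4 : φ * ((vol H (S ∩ R) : ℝ)) ≤ φ * (2 * ((d : ℝ) * ((S ∩ R).card : ℝ))) := by
    refine mul_le_mul_of_nonneg_left ?_ hφ0.le
    exact_mod_cast f4
  have q1 : (0 : ℝ) ≤ (1 - φ) * (ecount H (S ∩ A) (L \ S) : ℝ) :=
    mul_nonneg (by linarith) (Nat.cast_nonneg _)
  have q2 : (0 : ℝ) ≤ (1 - φ) * (ecount H (S ∩ B) (R \ S) : ℝ) :=
    mul_nonneg (by linarith) (Nat.cast_nonneg _)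
  have q3 : (0 : ℝ) ≤ (ecount H (S ∩ A) (L \ S) : ℝ) := Nat.cast_nonneg _
  have q4 : (0 : ℝ) ≤ (ecount H (S ∩ B) (R \ S) : ℝ) := Nat.cast_nonneg _
  have f5' : ((ecount H (S ∩ A) (L \ S) : ℝ)) + (ecount H (S ∩ B) (R \ S) : ℝ)
      + (ecount H (S ∩ L) (R \ S) : ℝ) + (ecount H (S ∩ R) (L \ S) : ℝ)
      ≤ (ecount H S Sᶜ : ℝ) := by exact_mod_cast f5
  have f7' : φ * (d : ℝ) * (((S ∩ L).card : ℝ) + ((S ∩ R).card : ℝ)) ≤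
      (ecount H (S ∩ L) (R \ S) : ℝ) + (ecount H (S ∩ R) (L \ S) : ℝ) := by
    push_cast at f7 ⊢
    convert f7 using 2
  push_cast
  linarith [p1, p2, p3, p4, q1, q2, q3, q4, f5', f7']

/-- `H` is a `φ`-expander: for every cut `∅ ≠ S ⊊ W`,
`min(vol(S), vol(Sᶜ)) > 0` and `e(S, Sᶜ) ≥ φ · min(vol(S), vol(Sᶜ))`. -/
def IsExpander [Fintype W] [DecidableEq W] (H : SimpleGraph W) [DecidableRel H.Adj]
    (φ : ℝ) : Prop :=
  ∀ S : Finset W, S.Nonempty → S ≠ Finset.univ →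
    0 < min (vol H S) (vol H Sᶜ) ∧
    φ * (min (vol H S) (vol H Sᶜ) : ℝ) ≤ (ecount H S Sᶜ : ℝ)

/-- The bipartiteness-preserving core gadget: the output graph is bipartite with parts
`A ∪ R` and `B ∪ L`, and there is a constant `c > 0` depending only on `φ` such that
it is a `c`-expander. -/
theorem bipartite_coreGadget_isExpander :
    ∃ c : ℝ → ℝ, (∀ φ : ℝ, 0 < φ → φ ≤ 1 → 0 < c φ) ∧
      ∀ (W : Type) [Fintype W] [DecidableEq W] (H : SimpleGraph W) [DecidableRel H.Adj]
        (A B L R : Finset W) (N d : ℕ) (φ : ℝ),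
        L.card = N → R.card = N → 1 ≤ N → 3 ≤ d → 0 < φ → φ ≤ 1 →
        Disjoint A B → Disjoint A L → Disjoint A R →
        Disjoint B L → Disjoint B R → Disjoint L R →
        A ∪ B ∪ L ∪ R = Finset.univ →
        -- (i) the induced subgraph on A ∪ B is bipartite with parts A and B, and all
        -- remaining edges go between A and L, between B and R, or between L and R
        (∀ u v : W, H.Adj u v →
          (u ∈ A ∧ v ∈ B) ∨ (u ∈ B ∧ v ∈ A) ∨ (u ∈ A ∧ v ∈ L) ∨ (u ∈ L ∧ v ∈ A) ∨
          (u ∈ B ∧ v ∈ R) ∨ (u ∈ R ∧ v ∈ B) ∨ (u ∈ L ∧ v ∈ R) ∨ (u ∈ R ∧ v ∈ L)) →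
        -- (ii) every a ∈ A has exactly deg_G(a) + 3 neighbors in L,
        -- and every b ∈ B has exactly deg_G(b) + 3 neighbors in R
        (∀ a ∈ A, (H.neighborFinset a ∩ L).card = (H.neighborFinset a ∩ B).card + 3) →
        (∀ b ∈ B, (H.neighborFinset b ∩ R).card = (H.neighborFinset b ∩ A).card + 3) →
        -- (iii) every x ∈ L has at most d neighbors in A,
        -- and every y ∈ R has at most d neighbors in B
        (∀ x ∈ L, (H.neighborFinset x ∩ A).card ≤ d) →
        (∀ y ∈ R, (H.neighborFinset y ∩ B).card ≤ d) →
        -- (iv) the bipartite graph X of L–R edges is d-regular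
        (∀ x ∈ L, (H.neighborFinset x ∩ R).card = d) →
        (∀ y ∈ R, (H.neighborFinset y ∩ L).card = d) →
        -- and a φ·d-edge expander
        (∀ T ⊆ L ∪ R, T.card ≤ N →
          φ * (d : ℝ) * (T.card : ℝ) ≤
            ((ecount H (T ∩ L) (R \ T) + ecount H (T ∩ R) (L \ T) : ℕ) : ℝ)) →
        -- conclusion: H is bipartite with parts A ∪ R and B ∪ L, and a (c φ)-expander
        (∀ u v : W, H.Adj u v →
          (u ∈ A ∪ R ∧ v ∈ B ∪ L) ∨ (u ∈ B ∪ L ∧ v ∈ A ∪ R)) ∧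
        IsExpander H (c φ) := by
  refine ⟨fun φ => φ / 4, fun φ hφ _ => by linarith, ?_⟩
  intro W _ _ H _ A B L R N d φ hL hR hN hd hφ0 hφ1 hAB hAL hAR hBL hBR hLR hUniv hEdge hA
    hB hLd hRd hLX hRX hX
  have hmem : ∀ v : W, v ∈ A ∪ B ∪ L ∪ R := fun v => by rw [hUniv]; exact Finset.mem_univ v
  constructor
  · intro u v huv
    rcases hEdge u v huv with ⟨h1, h2⟩ | ⟨h1, h2⟩ | ⟨h1, h2⟩ | ⟨h1, h2⟩ | ⟨h1, h2⟩ |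
      ⟨h1, h2⟩ | ⟨h1, h2⟩ | ⟨h1, h2⟩
    · exact Or.inl ⟨Finset.mem_union_left _ h1, Finset.mem_union_left _ h2⟩
    · exact Or.inr ⟨Finset.mem_union_left _ h1, Finset.mem_union_left _ h2⟩
    · exact Or.inl ⟨Finset.mem_union_left _ h1, Finset.mem_union_right _ h2⟩
    · exact Or.inr ⟨Finset.mem_union_right _ h1, Finset.mem_union_left _ h2⟩
    · exact Or.inr ⟨Finset.mem_union_left _ h1, Finset.mem_union_right _ h2⟩
    · exact Or.inl ⟨Finset.mem_union_right _ h1, Finset.mem_union_left _ h2⟩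
    · exact Or.inr ⟨Finset.mem_union_right _ h1, Finset.mem_union_right _ h2⟩
    · exact Or.inl ⟨Finset.mem_union_right _ h1, Finset.mem_union_right _ h2⟩
  -- neighbors of L-vertices lie in A ∪ R, of R-vertices in B ∪ L
  have hNL : ∀ x ∈ L, H.neighborFinset x ⊆ A ∪ R := by
    intro x hx v hv
    rw [SimpleGraph.mem_neighborFinset] at hv
    rcases hEdge x v hv with ⟨h1, h2⟩ | ⟨h1, h2⟩ | ⟨h1, h2⟩ | ⟨h1, h2⟩ | ⟨h1, h2⟩ |
      ⟨h1, h2⟩ | ⟨h1, h2⟩ | ⟨h1, h2⟩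
    · exact absurd h1 (Finset.disjoint_right.1 hAL hx)
    · exact absurd h1 (Finset.disjoint_right.1 hBL hx)
    · exact absurd h1 (Finset.disjoint_right.1 hAL hx)
    · exact Finset.mem_union_left _ h2
    · exact absurd h1 (Finset.disjoint_right.1 hBL hx)
    · exact absurd h1 (Finset.disjoint_left.1 hLR hx)
    · exact Finset.mem_union_right _ h2
    · exact absurd h1 (Finset.disjoint_left.1 hLR hx)
  have hNR : ∀ y ∈ R, H.neighborFinset y ⊆ B ∪ L := by
    intro y hy v hv
    rw [SimpleGraph.mem_neighborFinset] at hv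
    rcases hEdge y v hv with ⟨h1, h2⟩ | ⟨h1, h2⟩ | ⟨h1, h2⟩ | ⟨h1, h2⟩ | ⟨h1, h2⟩ |
      ⟨h1, h2⟩ | ⟨h1, h2⟩ | ⟨h1, h2⟩
    · exact absurd h1 (Finset.disjoint_right.1 hAR hy)
    · exact absurd h1 (Finset.disjoint_right.1 hBR hy)
    · exact absurd h1 (Finset.disjoint_right.1 hAR hy)
    · exact absurd h1 (Finset.disjoint_right.1 hLR hy)
    · exact absurd h1 (Finset.disjoint_right.1 hBR hy)
    · exact Finset.mem_union_left _ h2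
    · exact absurd h1 (Finset.disjoint_right.1 hLR hy)
    · exact Finset.mem_union_right _ h2
  have hvolL : ∀ x ∈ L, H.degree x ≤ 2 * d := by
    intro x hx
    have hsub : H.neighborFinset x ⊆
        (H.neighborFinset x ∩ A) ∪ (H.neighborFinset x ∩ R) := by
      intro v hv
      rcases Finset.mem_union.1 (hNL x hx hv) with h | h
      · exact Finset.mem_union_left _ (Finset.mem_inter.2 ⟨hv, h⟩)
      · exact Finset.mem_union_right _ (Finset.mem_inter.2 ⟨hv, h⟩)
    have h1 := le_trans (Finset.card_le_card hsub) (Finset.card_union_le _ _)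
    have h2 := hLd x hx
    have h3 := hLX x hx
    rw [← SimpleGraph.card_neighborFinset_eq_degree]
    omega
  have hvolR : ∀ y ∈ R, H.degree y ≤ 2 * d := by
    intro y hy
    have hsub : H.neighborFinset y ⊆
        (H.neighborFinset y ∩ B) ∪ (H.neighborFinset y ∩ L) := by
      intro v hv
      rcases Finset.mem_union.1 (hNR y hy hv) with h | h
      · exact Finset.mem_union_left _ (Finset.mem_inter.2 ⟨hv, h⟩)
      · exact Finset.mem_union_right _ (Finset.mem_inter.2 ⟨hv, h⟩)
    have h1 := le_trans (Finset.card_le_card hsub) (Finset.card_union_le _ _)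
    have h2 := hRd y hy
    have h3 := hRX y hy
    rw [← SimpleGraph.card_neighborFinset_eq_degree]
    omega
  have hdeg3 : ∀ v : W, 3 ≤ H.degree v := by
    intro v
    rw [← SimpleGraph.card_neighborFinset_eq_degree]
    rcases Finset.mem_union.1 (hmem v) with h | h4
    · rcases Finset.mem_union.1 h with h | h3
      · rcases Finset.mem_union.1 h with h1 | h2
        · have := hA v h1
          have hle : (H.neighborFinset v ∩ L).card ≤ (H.neighborFinset v).card :=
            Finset.card_le_card Finset.inter_subset_left
          omega
        · have := hB v h2
          have hle : (H.neighborFinset v ∩ R).card ≤ (H.neighborFinset v).card :=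
            Finset.card_le_card Finset.inter_subset_left
          omega
      · have := hLX v h3
        have hle : (H.neighborFinset v ∩ R).card ≤ (H.neighborFinset v).card :=
          Finset.card_le_card Finset.inter_subset_left
        omega
    · have := hRX v h4
      have hle : (H.neighborFinset v ∩ L).card ≤ (H.neighborFinset v).card :=
        Finset.card_le_card Finset.inter_subset_left
      omega
  have volpos : ∀ S : Finset W, S.Nonempty → 0 < vol H S := by
    rintro S ⟨v, hv⟩
    have h1 : H.degree v ≤ vol H S :=
      Finset.single_le_sum (f := fun w => H.degree w) (fun _ _ => Nat.zero_le _) hv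
    have := hdeg3 v
    omega
  intro S hSne hSuniv
  have hcompl : Sᶜ.Nonempty := by
    rw [← Finset.card_pos, Finset.card_compl]
    have h1 : S.card < Finset.univ.card :=
      Finset.card_lt_card (Finset.ssubset_univ_iff.2 hSuniv)
    rw [Finset.card_univ] at h1
    omega
  refine ⟨lt_min (volpos S hSne) (volpos Sᶜ hcompl), ?_⟩
  have hsum : (S ∩ (L ∪ R)).card + (Sᶜ ∩ (L ∪ R)).card = 2 * N := by
    have hu : (S ∩ (L ∪ R)) ∪ (Sᶜ ∩ (L ∪ R)) = L ∪ R := by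
      ext v
      simp only [Finset.mem_union, Finset.mem_inter, Finset.mem_compl]
      tauto
    have hdisj : Disjoint (S ∩ (L ∪ R)) (Sᶜ ∩ (L ∪ R)) :=
      (disjoint_compl_right).mono Finset.inter_subset_left Finset.inter_subset_left
    have hcard := Finset.card_union_of_disjoint hdisj
    rw [hu] at hcard
    have hLRcard : (L ∪ R).card = N + N := by
      rw [Finset.card_union_of_disjoint hLR, hL, hR]
    omega
  have key := key_expansion H A B L R N d φ hφ0 hφ1 hAB hAL hAR hBL hBR hLR hUniv hEdge hA
    hB hLd hRd hX hvolL hvolR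
  by_cases hc : (S ∩ (L ∪ R)).card ≤ N
  · have h := key S hc
    calc (fun φ => φ / 4 : ℝ → ℝ) φ * (min (vol H S) (vol H Sᶜ) : ℝ)
        ≤ φ / 4 * (vol H S : ℝ) := mul_le_mul_of_nonneg_left (min_le_left _ _) (by linarith)
      _ ≤ _ := h
  · have hc' : (Sᶜ ∩ (L ∪ R)).card ≤ N := by omega
    have h := key Sᶜ hc'
    rw [compl_compl, ecount_comm H Sᶜ S] at h
    calc (fun φ => φ / 4 : ℝ → ℝ) φ * (min (vol H S) (vol H Sᶜ) : ℝ)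
        ≤ φ / 4 * (vol H Sᶜ : ℝ) := mul_le_mul_of_nonneg_left (min_le_right _ _) (by linarith)
      _ ≤ _ := h
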